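/- arXiv:2310.16428 — 4 statements merged into one kernel-verified Lean document; each statement's English description precedes it below -/
import Mathlib

section
/- For integers 0 ≤ θ_1 < θ_2 and λ > 0, G_P'(λ) > 0 if and only if λ < (θ_2!/θ_1!)^{1/(θ_2-θ_1)}, where G_P(λ) = ∑_{i=θ_1+1}^{θ_2} e^{-λ} λ^i / i!. -/
open Finset

/-!
The terms `p_i(x) = e^{-x} x^i / i!` satisfy `p_{i+1}' = p_i - p_{i+1}`, so the derivative of
`∑_{i=θ₁+1}^{θ₂} p_i` telescopes to `p_{θ₁} - p_{θ₂}`. Since `p_{θ₂}(λ) / p_{θ₁}(λ) = λ^{θ₂-θ₁} θ₁! / θ₂!`,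
this is positive exactly when `λ^{θ₂-θ₁} < θ₂! / θ₁!`.
-/

noncomputable def poissonTerm (i : ℕ) (x : ℝ) : ℝ :=
  Real.exp (-x) * x ^ i / (Nat.factorial i)

theorem hasDerivAt_poissonTerm_succ (k : ℕ) (x : ℝ) :
    HasDerivAt (poissonTerm (k + 1)) (poissonTerm k x - poissonTerm (k + 1) x) x := by
  have hexp : HasDerivAt (fun y : ℝ => Real.exp (-y)) (-Real.exp (-x)) x := by
    simpa using (hasDerivAt_neg x).exp
  have hpow : HasDerivAt (fun y : ℝ => y ^ (k + 1)) ((k + 1 : ℕ) * x ^ k) x := by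
    simpa using hasDerivAt_pow (k + 1) x
  refine ((hexp.fun_mul hpow).div_const ((k + 1).factorial : ℝ)).congr_deriv ?_
  simp only [poissonTerm, Nat.factorial_succ]
  push_cast
  field_simp
  ring

theorem hasDerivAt_sum_Ioc_poissonTerm {a b : ℕ} (hab : a ≤ b) (x : ℝ) :
    HasDerivAt (fun y => ∑ i ∈ Ioc a b, poissonTerm i y) (poissonTerm a x - poissonTerm b x) x := by
  induction b, hab using Nat.le_induction with
  | base => simpa using hasDerivAt_const x (0 : ℝ)
  | succ b hab ih =>
    simp only [sum_Ioc_succ_top hab]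
    exact (ih.add (hasDerivAt_poissonTerm_succ b x)).congr_deriv (by ring)

theorem poissonTerm_lt_poissonTerm_iff {m n : ℕ} (hmn : m ≤ n) {x : ℝ} (hx : 0 < x) :
    poissonTerm n x < poissonTerm m x ↔ x ^ (n - m) < (n.factorial : ℝ) / m.factorial := by
  have hm : (0 : ℝ) < m.factorial := by positivity
  have hn : (0 : ℝ) < n.factorial := by positivity
  have hpow : x ^ n = x ^ m * x ^ (n - m) := by rw [← pow_add, Nat.add_sub_cancel' hmn]
  have hpos : 0 < Real.exp (-x) * x ^ m := by positivity
  calc poissonTerm n x < poissonTerm m x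
      ↔ (Real.exp (-x) * x ^ m) * (x ^ (n - m) * m.factorial)
        < (Real.exp (-x) * x ^ m) * n.factorial := by
        rw [poissonTerm, poissonTerm, div_lt_div_iff₀ hn hm, hpow]
        simp only [mul_assoc]
    _ ↔ x ^ (n - m) < (n.factorial : ℝ) / m.factorial := by
        rw [mul_lt_mul_iff_right₀ hpos, lt_div_iff₀ hm]

theorem stmt3 (θ1 θ2 : ℕ) (h : θ1 < θ2) (lam : ℝ) (hlam : 0 < lam) :
    0 < deriv
        (fun x : ℝ => ∑ i ∈ Finset.Icc (θ1 + 1) θ2, Real.exp (-x) * x ^ i / (Nat.factorial i))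
        lam ↔
      lam < ((Nat.factorial θ2 : ℝ) / (Nat.factorial θ1)) ^ (((θ2 : ℝ) - θ1)⁻¹) := by
  have hderiv : HasDerivAt
      (fun x : ℝ => ∑ i ∈ Icc (θ1 + 1) θ2, Real.exp (-x) * x ^ i / (Nat.factorial i))
      (poissonTerm θ1 lam - poissonTerm θ2 lam) lam :=
    Icc_add_one_left_eq_Ioc θ1 θ2 ▸ hasDerivAt_sum_Ioc_poissonTerm h.le lam
  rw [hderiv.deriv, sub_pos, poissonTerm_lt_poissonTerm_iff h.le hlam, ← Nat.cast_sub h.le,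
    Real.lt_rpow_inv_iff_of_pos hlam.le (by positivity) (by exact_mod_cast Nat.sub_pos_of_lt h),
    Real.rpow_natCast]
end

section
/- For integers 0 ≤ θ_1 < θ_2, the function G_P(λ) = ∑_{i=θ_1+1}^{θ_2} e^{-λ} λ^i/i! attains its maximum over λ ∈ (0,∞) uniquely at λ* = (θ_2!/θ_1!)^{1/(θ_2-θ_1)}; it is strictly increasing on (0, λ*] and strictly decreasing on [λ*, ∞). -/
/-!
The terms of the sum telescope under differentiation:
`G'(λ) = e^{-λ} (λ^{θ₁}/θ₁! - λ^{θ₂}/θ₂!) = e^{-λ} λ^{θ₁}/θ₂! · (λ*^{θ₂-θ₁} - λ^{θ₂-θ₁})`,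
which is positive on `(0, λ*)` and negative on `(λ*, ∞)`.
-/

open Finset Set

lemma hasDerivAt_exp_neg_mul_pow_succ_div_factorial (n : ℕ) (x : ℝ) :
    HasDerivAt (fun y : ℝ => Real.exp (-y) * y ^ (n + 1) / (n + 1).factorial)
      (Real.exp (-x) * (x ^ n / n.factorial - x ^ (n + 1) / (n + 1).factorial)) x := by
  have h := (((hasDerivAt_neg x).exp).mul (hasDerivAt_pow (n + 1) x)).div_const
    ((n + 1).factorial : ℝ)
  refine h.congr_deriv ?_
  rw [Nat.factorial_succ, Nat.add_sub_cancel]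
  push_cast
  field_simp
  ring

lemma hasDerivAt_sum_Icc_exp_neg_mul_pow_div_factorial {a b : ℕ} (hab : a ≤ b) (x : ℝ) :
    HasDerivAt (fun y : ℝ => ∑ i ∈ Icc (a + 1) b, Real.exp (-y) * y ^ i / i.factorial)
      (Real.exp (-x) * (x ^ a / a.factorial - x ^ b / b.factorial)) x := by
  induction b, hab using Nat.le_induction with
  | base =>
    simpa only [Finset.Icc_eq_empty_of_lt (Nat.lt_succ_self a), sum_empty, sub_self, mul_zero]
      using hasDerivAt_const x (0 : ℝ)
  | succ b hab ih =>
    simp only [sum_Icc_succ_top (Nat.succ_le_succ hab)]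
    exact (ih.add (hasDerivAt_exp_neg_mul_pow_succ_div_factorial b x)).congr_deriv (by ring)

lemma pow_div_factorial_sub_pow_div_factorial {a b : ℕ} (hab : a ≤ b) (x : ℝ) :
    x ^ a / a.factorial - x ^ b / b.factorial =
      x ^ a / b.factorial * ((b.factorial : ℝ) / a.factorial - x ^ (b - a)) := by
  rw [← Nat.add_sub_cancel' hab, pow_add, Nat.add_sub_cancel_left]
  field_simp

lemma strictMonoOn_Ioc_strictAntiOn_Ici_of_hasDerivAt {f f' : ℝ → ℝ} {a c : ℝ}
    (hf : ∀ x, HasDerivAt f (f' x) x) (hpos : ∀ x ∈ Ioo a c, 0 < f' x)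
    (hneg : ∀ x ∈ Ioi c, f' x < 0) :
    StrictMonoOn f (Ioc a c) ∧ StrictAntiOn f (Ici c) := by
  have hcont : Continuous f := continuous_iff_continuousAt.2 fun x => (hf x).continuousAt
  refine ⟨strictMonoOn_of_deriv_pos (convex_Ioc a c) hcont.continuousOn fun x hx => ?_,
    strictAntiOn_of_deriv_neg (convex_Ici c) hcont.continuousOn fun x hx => ?_⟩
  · rw [interior_Ioc] at hx
    exact (hf x).deriv ▸ hpos x hx
  · rw [interior_Ici] at hx
    exact (hf x).deriv ▸ hneg x hx

lemma lt_of_strictMonoOn_Ioc_of_strictAntiOn_Ici {f : ℝ → ℝ} {a c : ℝ} (hac : a < c)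
    (hmono : StrictMonoOn f (Ioc a c)) (hanti : StrictAntiOn f (Ici c)) :
    ∀ x ∈ Ioi a, x ≠ c → f x < f c := by
  intro x hx hxc
  rcases hxc.lt_or_gt with hlt | hgt
  · exact hmono ⟨hx, hlt.le⟩ ⟨hac, le_rfl⟩ hlt
  · exact hanti self_mem_Ici hgt.le hgt

theorem stmt4 (θ1 θ2 : ℕ) (h : θ1 < θ2) :
    let G : ℝ → ℝ :=
      fun x => ∑ i ∈ Finset.Icc (θ1 + 1) θ2, Real.exp (-x) * x ^ i / (Nat.factorial i)
    let lamStar : ℝ := ((Nat.factorial θ2 : ℝ) / (Nat.factorial θ1)) ^ (((θ2 : ℝ) - θ1)⁻¹)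
    StrictMonoOn G (Set.Ioc 0 lamStar) ∧ StrictAntiOn G (Set.Ici lamStar) ∧
      ∀ x ∈ Set.Ioi (0 : ℝ), x ≠ lamStar → G x < G lamStar := by
  intro G lamStar
  set d := θ2 - θ1
  have hratio : (0 : ℝ) < (θ2.factorial : ℝ) / θ1.factorial := by positivity
  have hlam_pos : 0 < lamStar := Real.rpow_pos_of_pos hratio _
  have hlam_pow : lamStar ^ d = (θ2.factorial : ℝ) / θ1.factorial := by
    have hd : ((θ2 : ℝ) - θ1) = d := by rw [Nat.cast_sub h.le]
    simp only [lamStar, hd]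
    exact Real.rpow_inv_natCast_pow hratio.le (Nat.sub_ne_zero_of_lt h)
  have hG : ∀ x, HasDerivAt G
      (Real.exp (-x) * (x ^ θ1 / θ2.factorial * (lamStar ^ d - x ^ d))) x := fun x => by
    rw [hlam_pow, ← pow_div_factorial_sub_pow_div_factorial h.le]
    exact hasDerivAt_sum_Icc_exp_neg_mul_pow_div_factorial h.le x
  obtain ⟨hmono, hanti⟩ := strictMonoOn_Ioc_strictAntiOn_Ici_of_hasDerivAt hG
    (fun x hx => by
      have hpow := pow_lt_pow_left₀ hx.2 hx.1.le (Nat.sub_ne_zero_of_lt h)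
      have hx0 : 0 < x := hx.1
      exact mul_pos (Real.exp_pos _) (mul_pos (by positivity) (sub_pos.2 hpow)))
    (fun x hx => by
      have hx0 : 0 < x := hlam_pos.trans hx
      have hpow := pow_lt_pow_left₀ hx hlam_pos.le (Nat.sub_ne_zero_of_lt h)
      exact mul_neg_of_pos_of_neg (Real.exp_pos _)
        (mul_neg_of_pos_of_neg (by positivity) (sub_neg.2 hpow)))
  exact ⟨hmono, hanti, lt_of_strictMonoOn_Ioc_of_strictAntiOn_Ici hlam_pos hmono hanti⟩
end

section
/- Fix integers n ≥ 1 and 0 ≤ θ_1 < θ_2 ≤ n-1. Define G_B(p) = F_B(θ_2; n, p) - F_B(θ_1; n, p) for p ∈ (0,1), where F_B is the Binomial(n,p) CDF. Then G_B'(p) = p^{θ_1}(1-p)^{n-θ_2-1}[(n-θ_1)C(n,θ_1)(1-p)^{θ_2-θ_1} - (n-θ_2)C(n,θ_2)p^{θ_2-θ_1}]. -/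
/-!
The derivative of the binomial CDF telescopes: differentiating `C(n,i) x^i (1-x)^(n-i)` gives
`a(i-1) - a(i)` with `a(i) = (n-i) C(n,i) x^i (1-x)^(n-i-1)`, because `i C(n,i) = (n-i+1) C(n,i-1)`.
Hence `F_B'(θ) = -a(θ)` and `G_B' = a(θ₁) - a(θ₂)`,
from which `p^θ₁ (1-p)^(n-θ₂-1)` factors out.
-/

open Finset

noncomputable def binomCDF (n θ : ℕ) (x : ℝ) : ℝ :=
  ∑ i ∈ range (θ + 1), (n.choose i : ℝ) * x ^ i * (1 - x) ^ (n - i)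

lemma hasDerivAt_pow_mul_one_sub_pow (i m : ℕ) (x : ℝ) :
    HasDerivAt (fun y : ℝ => y ^ i * (1 - y) ^ m)
      (i * x ^ (i - 1) * (1 - x) ^ m - m * x ^ i * (1 - x) ^ (m - 1)) x :=
  ((hasDerivAt_pow i x).fun_mul (((hasDerivAt_id' x).const_sub 1).fun_pow m)).congr_deriv
    (by ring)

lemma Nat.cast_choose_succ_right_eq {R : Type*} [Ring R] (n k : ℕ) :
    (n.choose (k + 1) : R) * (k + 1) = n.choose k * (n - k) := by
  rcases le_or_gt k n with hk | hk
  · simpa [Nat.cast_sub hk] using congrArg (Nat.cast : ℕ → R) (Nat.choose_succ_right_eq n k)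
  · simp [Nat.choose_eq_zero_of_lt hk, Nat.choose_eq_zero_of_lt (Nat.lt_succ_of_lt hk)]

lemma hasDerivAt_binomCDF (n θ : ℕ) (x : ℝ) :
    HasDerivAt (binomCDF n θ)
      (-((n - θ : ℝ) * n.choose θ * x ^ θ * (1 - x) ^ (n - θ - 1))) x := by
  induction θ with
  | zero =>
    convert hasDerivAt_pow_mul_one_sub_pow 0 n x using 1
    · ext y; simp [binomCDF]
    · simp
  | succ θ ih =>
    have hsplit : binomCDF n (θ + 1) = fun y =>
        binomCDF n θ y + n.choose (θ + 1) * (y ^ (θ + 1) * (1 - y) ^ (n - (θ + 1))) := by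
      ext y; simp only [binomCDF, sum_range_succ]; ring
    have hterm := (hasDerivAt_pow_mul_one_sub_pow (θ + 1) (n - (θ + 1)) x).const_mul
      (n.choose (θ + 1) : ℝ)
    rw [hsplit]
    refine (ih.fun_add hterm).congr_deriv ?_
    -- the cast of `n - (θ + 1)` is only wrong when `n < θ + 1`, where `n.choose (θ + 1) = 0`
    have hcast : (n.choose (θ + 1) : ℝ) * ((n - (θ + 1) : ℕ) : ℝ) =
        n.choose (θ + 1) * (n - (θ + 1)) := by
      rcases le_or_gt (θ + 1) n with h | h
      · push_cast [h]; ring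
      · simp [Nat.choose_eq_zero_of_lt h]
    rw [Nat.sub_sub, Nat.add_sub_cancel]
    push_cast
    linear_combination
      (x ^ θ * (1 - x) ^ (n - (θ + 1))) * Nat.cast_choose_succ_right_eq (R := ℝ) n θ -
        (x ^ (θ + 1) * (1 - x) ^ (n - (θ + 1) - 1)) * hcast

theorem stmt7_general (n θ1 θ2 : ℕ) (h1 : θ1 < θ2) (h2 : θ2 ≤ n - 1) (p : ℝ) :
    HasDerivAt
      (fun x : ℝ =>
        (∑ i ∈ Finset.range (θ2 + 1), (n.choose i : ℝ) * x ^ i * (1 - x) ^ (n - i)) -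
          ∑ i ∈ Finset.range (θ1 + 1), (n.choose i : ℝ) * x ^ i * (1 - x) ^ (n - i))
      (p ^ θ1 * (1 - p) ^ (n - θ2 - 1) *
        (((n : ℝ) - θ1) * (n.choose θ1 : ℝ) * (1 - p) ^ (θ2 - θ1) -
          ((n : ℝ) - θ2) * (n.choose θ2 : ℝ) * p ^ (θ2 - θ1))) p := by
  refine ((hasDerivAt_binomCDF n θ2 p).fun_sub (hasDerivAt_binomCDF n θ1 p)).congr_deriv ?_
  have hp : p ^ θ2 = p ^ θ1 * p ^ (θ2 - θ1) := by rw [← pow_add]; congr 1; omega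
  have hq : (1 - p) ^ (n - θ1 - 1) = (1 - p) ^ (n - θ2 - 1) * (1 - p) ^ (θ2 - θ1) := by
    rw [← pow_add]; congr 1; omega
  rw [hp, hq]
  ring

theorem stmt7 (n θ1 θ2 : ℕ) (hn : 1 ≤ n) (h1 : θ1 < θ2) (h2 : θ2 ≤ n - 1) (p : ℝ)
    (hp : p ∈ Set.Ioo (0 : ℝ) 1) :
    HasDerivAt
      (fun x : ℝ =>
        (∑ i ∈ Finset.range (θ2 + 1), (n.choose i : ℝ) * x ^ i * (1 - x) ^ (n - i)) -
          ∑ i ∈ Finset.range (θ1 + 1), (n.choose i : ℝ) * x ^ i * (1 - x) ^ (n - i))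
      (p ^ θ1 * (1 - p) ^ (n - θ2 - 1) *
        (((n : ℝ) - θ1) * (n.choose θ1 : ℝ) * (1 - p) ^ (θ2 - θ1) -
          ((n : ℝ) - θ2) * (n.choose θ2 : ℝ) * p ^ (θ2 - θ1))) p :=
  stmt7_general n θ1 θ2 h1 h2 p
end

section
/- Greedy maximization of a monotone nondecreasing submodular function f with f(∅) = 0 under a cardinality constraint k achieves value at least (1 - 1/e) times the optimum: if S_g is the greedy solution and S* the optimal size-k subset, then f(S_g) ≥ (1 - 1/e) f(S*). -/
open Finset

/-- Diminishing returns: derived from pairwise submodularity by induction on `(B \ A).card`. -/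
lemma dim_ret {W : Type*} [DecidableEq W] (f : Finset W → ℝ)
    (hsub : ∀ (A : Finset W) (a b : W), a ∉ A → b ∉ A → a ≠ b →
      f (insert a A) + f (insert b A) ≥ f (insert a (insert b A)) + f A) :
    ∀ (n : ℕ) (A B : Finset W), (B \ A).card = n → A ⊆ B → ∀ a ∉ B,
      f (insert a B) - f B ≤ f (insert a A) - f A := by
  intro n
  induction n with
  | zero =>
    intro A B h hAB a ha
    have hBA : B = A :=
      subset_antisymm (Finset.sdiff_eq_empty_iff_subset.mp (Finset.card_eq_zero.mp h)) hAB
    simp [hBA]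
  | succ n ih =>
    intro A B h hAB a ha
    obtain ⟨b, hb⟩ : (B \ A).Nonempty := by
      rw [← Finset.card_pos, h]; omega
    have hbB : b ∈ B := (Finset.mem_sdiff.mp hb).1
    have hbA : b ∉ A := (Finset.mem_sdiff.mp hb).2
    have hins : insert b (B.erase b) = B := Finset.insert_erase hbB
    have haB' : a ∉ B.erase b := fun h' => ha (Finset.mem_of_mem_erase h')
    have hbB' : b ∉ B.erase b := Finset.notMem_erase b B
    have hab : a ≠ b := fun h' => ha (h' ▸ hbB)
    have h1 := hsub (B.erase b) a b haB' hbB' hab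
    rw [hins] at h1
    have hAB' : A ⊆ B.erase b := fun x hx =>
      Finset.mem_erase.mpr ⟨fun h' => hbA (h' ▸ hx), hAB hx⟩
    have hcard' : (B.erase b \ A).card = n := by
      have : B.erase b \ A = (B \ A).erase b := by
        ext x; simp [Finset.mem_erase, Finset.mem_sdiff]; tauto
      rw [this, Finset.card_erase_of_mem hb, h]
      omega
    have h2 := ih A (B.erase b) hcard' hAB' a haB'
    linarith

lemma sum_marg {W : Type*} [DecidableEq W] (f : Finset W → ℝ)
    (hsub : ∀ (A : Finset W) (a b : W), a ∉ A → b ∉ A → a ≠ b →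
      f (insert a A) + f (insert b A) ≥ f (insert a (insert b A)) + f A) :
    ∀ (T A : Finset W), f (A ∪ T) ≤ f A + ∑ x ∈ T, (f (insert x A) - f A) := by
  intro T
  induction T using Finset.induction with
  | empty => simp
  | @insert t T' ht ih =>
    intro A
    rw [Finset.sum_insert ht]
    have h1 : A ∪ insert t T' = insert t (A ∪ T') := by
      ext x; simp [or_comm, or_left_comm]
    by_cases htA : t ∈ A
    · have h2 : insert t (A ∪ T') = A ∪ T' :=
        Finset.insert_eq_self.mpr (Finset.mem_union_left _ htA)
      have h3 : insert t A = A := Finset.insert_eq_self.mpr htA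
      rw [h1, h2, h3]
      have := ih A
      linarith
    · have htAT : t ∉ A ∪ T' := by
        simp only [Finset.mem_union]; tauto
      have h2 := dim_ret f hsub ((A ∪ T') \ A).card A (A ∪ T') rfl
        (Finset.subset_union_left) t htAT
      rw [h1]
      have := ih A
      linarith

theorem stmt18 {W : Type*} [DecidableEq W] [Fintype W]
    (f : Finset W → ℝ)
    (hsub : ∀ (A : Finset W) (a b : W), a ∉ A → b ∉ A → a ≠ b →
      f (insert a A) + f (insert b A) ≥ f (insert a (insert b A)) + f A)
    (hmono : ∀ A B : Finset W, A ⊆ B → f A ≤ f B)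
    (hzero : f ∅ = 0)
    (k : ℕ) (hk : k ≤ Fintype.card W)
    (S : ℕ → Finset W) (hS0 : S 0 = ∅)
    (hgreedy : ∀ i < k, ∃ a : W, a ∉ S i ∧ S (i + 1) = insert a (S i) ∧
      ∀ b : W, f (insert b (S i)) ≤ f (insert a (S i)))
    (Sstar : Finset W) (hcard : Sstar.card = k) :
    f (S k) ≥ (1 - 1 / Real.exp 1) * f Sstar := by
  rcases Nat.eq_zero_or_pos k with hk0 | hk1
  · subst hk0
    have : Sstar = ∅ := Finset.card_eq_zero.mp hcard
    rw [this, hS0, hzero]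
    simp
  -- k ≥ 1
  have hkR : (0 : ℝ) < k := by exact_mod_cast hk1
  set c : ℝ := 1 - 1 / (k : ℝ) with hc
  have hc0 : 0 ≤ c := by
    rw [hc]
    have : 1 / (k : ℝ) ≤ 1 := by
      rw [div_le_one hkR]; exact_mod_cast hk1
    linarith
  have hfS0 : 0 ≤ f Sstar := by
    rw [← hzero]; exact hmono _ _ (Finset.empty_subset _)
  -- main induction
  have key : ∀ i ≤ k, f Sstar - f (S i) ≤ c ^ i * f Sstar := by
    intro i hi
    induction i with
    | zero => simp [hS0, hzero]
    | succ i ih =>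
      have hik : i < k := hi
      have ihh := ih (le_of_lt hik)
      obtain ⟨a, haS, hSi1, hmax⟩ := hgreedy i hik
      -- f Sstar ≤ f (S i) + k * (f (S (i+1)) - f (S i))
      have h1 : f Sstar ≤ f (S i ∪ Sstar) := hmono _ _ (Finset.subset_union_right)
      have h2 := sum_marg f hsub Sstar (S i)
      have h3 : ∑ x ∈ Sstar, (f (insert x (S i)) - f (S i)) ≤
          ∑ _x ∈ Sstar, (f (S (i + 1)) - f (S i)) := by
        apply Finset.sum_le_sum
        intro x _
        have := hmax x
        rw [hSi1]
        linarith
      have h4 : ∑ _x ∈ Sstar, (f (S (i + 1)) - f (S i)) =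
          (k : ℝ) * (f (S (i + 1)) - f (S i)) := by
        rw [Finset.sum_const, hcard, nsmul_eq_mul]
      have hkd : f Sstar - f (S i) ≤ (k : ℝ) * (f (S (i + 1)) - f (S i)) := by
        rw [h4] at h3; linarith
      -- so f Sstar - f (S (i+1)) ≤ c * (f Sstar - f (S i))
      have hstep : f Sstar - f (S (i + 1)) ≤ c * (f Sstar - f (S i)) := by
        have hd : (f Sstar - f (S i)) / k ≤ f (S (i + 1)) - f (S i) := by
          rw [div_le_iff₀ hkR]; linarith [mul_comm (f (S (i+1)) - f (S i)) (k:ℝ)]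
        have : c * (f Sstar - f (S i)) = (f Sstar - f (S i)) - (f Sstar - f (S i)) / k := by
          rw [hc]; ring
        rw [this]
        linarith
      calc f Sstar - f (S (i + 1)) ≤ c * (f Sstar - f (S i)) := hstep
        _ ≤ c * (c ^ i * f Sstar) := by
            exact mul_le_mul_of_nonneg_left ihh hc0
        _ = c ^ (i + 1) * f Sstar := by ring
  have hfinal := key k le_rfl
  -- c ^ k ≤ 1 / exp 1
  have hexp : c ≤ Real.exp (-(1 / (k : ℝ))) := by
    have := Real.add_one_le_exp (-(1 / (k : ℝ)))
    rw [hc]; linarith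
  have hck : c ^ k ≤ 1 / Real.exp 1 := by
    calc c ^ k ≤ (Real.exp (-(1 / (k : ℝ)))) ^ k := pow_le_pow_left₀ hc0 hexp k
      _ = Real.exp ((k : ℝ) * (-(1 / (k : ℝ)))) := (Real.exp_nat_mul _ k).symm
      _ = Real.exp (-1) := by
          congr 1
          field_simp
      _ = 1 / Real.exp 1 := by rw [Real.exp_neg]; ring
  have : c ^ k * f Sstar ≤ (1 / Real.exp 1) * f Sstar :=
    mul_le_mul_of_nonneg_right hck hfS0
  linarith
end
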